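/- arXiv:2206.05545 — 4 statements merged into one kernel-verified Lean document; each statement's English description precedes it below -/
import Mathlib

section
/- Let 0 < r < s < 1 and let Y be a random variable with Y > 0 almost surely such that 𝔼[Y^s] < ∞ and such that log Y has finite second moment under each tilted measure 𝔼_q (q ∈ [0,s]). Then 𝔼[Y^r] = 𝔼[Y^s]^{r/s} · exp( − ∫₀^s f_{r,s}(q) · Var_q[log Y] dq ), where f_{r,s}(q) := (1/s) · min(r,q) · (s − max(r,q)) for q ∈ (0,s). -/
open MeasureTheory

noncomputable section

/-- Expectation of `Z` under the `q`-tilted measure with tilt variable `X`: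
`𝔼_q[Z] = 𝔼[Z e^{qX}] / 𝔼[e^{qX}]`. -/
def tiltExp {α : Type*} [MeasurableSpace α] (μ : Measure α) (X : α → ℝ) (q : ℝ)
    (Z : α → ℝ) : ℝ :=
  (∫ ω, Z ω * Real.exp (q * X ω) ∂μ) / (∫ ω, Real.exp (q * X ω) ∂μ)

/-- Variance of `X` under the `q`-tilted measure: `Var_q[X] = 𝔼_q[(X - 𝔼_q[X])²]`. -/
def tiltVar {α : Type*} [MeasurableSpace α] (μ : Measure α) (X : α → ℝ) (q : ℝ) : ℝ :=
  tiltExp μ X q (fun ω => (X ω - tiltExp μ X q X) ^ 2)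

/-! The cumulant generating function `Λ(q) = log 𝔼[Y^q]` of `log Y` satisfies `Λ(0) = 0`, and on
`(0, s)` its first two derivatives are the tilted mean and the tilted variance of `log Y`.
Since `f_{r,s}` is the Green's function of `-d²/dq²` on `[0, s]`, integrating by parts twice gives
`Λ(r) = (r/s) Λ(s) - ∫₀^s f_{r,s} Λ''`, which is the claim after exponentiating. The second moment
hypotheses at `q = 0, s` make `Λ'` continuous up to the endpoints, and `Λ'' ≥ 0` makes `Λ''`
integrable. -/

open Set Real ProbabilityTheory

lemma exp_mul_le_exp_mul_add_exp_mul {a b q : ℝ} (hq : q ∈ Icc a b) (x : ℝ) :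
    exp (q * x) ≤ exp (a * x) + exp (b * x) := by
  rcases le_total 0 x with hx | hx
  · have := exp_le_exp.2 (mul_le_mul_of_nonneg_right hq.2 hx)
    linarith [exp_pos (a * x)]
  · have := exp_le_exp.2 (mul_le_mul_of_nonpos_right hq.1 hx)
    linarith [exp_pos (b * x)]

lemma integral_green_mul_eq {f f' f'' : ℝ → ℝ} {r s : ℝ} (hr : 0 ≤ r) (hrs : r ≤ s) (hs : 0 < s)
    (hf : ContinuousOn f (Icc 0 s)) (hf' : ContinuousOn f' (Icc 0 s))
    (hdf : ∀ q ∈ Ioo 0 s, HasDerivAt f (f' q) q) (hdf' : ∀ q ∈ Ioo 0 s, HasDerivAt f' (f'' q) q)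
    (hf'' : IntervalIntegrable f'' volume 0 s) :
    ∫ q in (0:ℝ)..s, 1 / s * min r q * (s - max r q) * f'' q
      = (1 - r / s) * f 0 + r / s * f s - f r := by
  set g : ℝ → ℝ := fun q => 1 / s * min r q * (s - max r q) * f'' q
  have hg : IntervalIntegrable g volume 0 s :=
    hf''.continuousOn_mul (by fun_prop)
  have hIcc₁ : Icc 0 r ⊆ Icc 0 s := Icc_subset_Icc le_rfl hrs
  have hIcc₂ : Icc r s ⊆ Icc 0 s := Icc_subset_Icc hr le_rfl
  have hg₁ : IntervalIntegrable g volume 0 r :=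
    hg.mono_set (by rw [uIcc_of_le hr, uIcc_of_le hs.le]; exact hIcc₁)
  have hg₂ : IntervalIntegrable g volume r s :=
    hg.mono_set (by rw [uIcc_of_le hrs, uIcc_of_le hs.le]; exact hIcc₂)
  have hleft : ∫ q in (0:ℝ)..r, g q
      = (s - r) / s * (r * f' r - f r) - (s - r) / s * (0 * f' 0 - f 0) := by
    refine intervalIntegral.integral_eq_sub_of_hasDerivAt_of_le
      (f := fun q => (s - r) / s * (q * f' q - f q)) hr
      (by have := hf.mono hIcc₁; have := hf'.mono hIcc₁; fun_prop) (fun q hq => ?_) hg₁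
    have hq' : q ∈ Ioo 0 s := ⟨hq.1, hq.2.trans_le hrs⟩
    refine ((((hasDerivAt_id' q).mul (hdf' q hq')).sub (hdf q hq')).const_mul
      ((s - r) / s)).congr_deriv ?_
    simp only [g, min_eq_right hq.2.le, max_eq_left hq.2.le]
    field_simp
    ring
  have hright : ∫ q in r..s, g q
      = r / s * (f s + (s - s) * f' s) - r / s * (f r + (s - r) * f' r) := by
    refine intervalIntegral.integral_eq_sub_of_hasDerivAt_of_le
      (f := fun q => r / s * (f q + (s - q) * f' q)) hrs
      (by have := hf.mono hIcc₂; have := hf'.mono hIcc₂; fun_prop) (fun q hq => ?_) hg₂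
    have hq' : q ∈ Ioo 0 s := ⟨hr.trans_lt hq.1, hq.2⟩
    refine (((hdf q hq').add (((hasDerivAt_id' q).const_sub s).mul (hdf' q hq'))).const_mul
      (r / s)).congr_deriv ?_
    simp only [g, min_eq_left hq.1.le, max_eq_right hq.1.le]
    field_simp
    ring
  rw [← intervalIntegral.integral_add_adjacent_intervals hg₁ hg₂, hleft, hright]
  field_simp
  ring

lemma MeasureTheory.Integrable.mul_of_sq_mul {α : Type*} [MeasurableSpace α] {μ : Measure α}
    {f g : α → ℝ} (hg : AEStronglyMeasurable g μ) (hf : Integrable f μ)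
    (hgf : Integrable (fun ω => g ω ^ 2 * f ω) μ) : Integrable (fun ω => g ω * f ω) μ := by
  refine (hf.norm.add hgf.norm).mono' (hg.mul hf.aestronglyMeasurable) (ae_of_all _ fun ω => ?_)
  have hg1 : |g ω| ≤ 1 + g ω ^ 2 := by nlinarith [sq_abs (g ω), sq_nonneg (|g ω| - 1)]
  show |g ω * f ω| ≤ |f ω| + |g ω ^ 2 * f ω|
  rw [abs_mul, abs_mul, abs_pow, sq_abs]
  nlinarith [abs_nonneg (f ω)]

namespace ProbabilityTheory

variable {α : Type*} [MeasurableSpace α] {μ : Measure α} {X : α → ℝ} {q : ℝ}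

lemma integral_rpow_eq_mgf_log {Y : α → ℝ} (hpos : ∀ᵐ ω ∂μ, 0 < Y ω) (t : ℝ) :
    ∫ ω, Y ω ^ t ∂μ = mgf (fun ω => log (Y ω)) μ t :=
  integral_congr_ae (hpos.mono fun ω hω => by
    show Y ω ^ t = exp (t * log (Y ω))
    rw [rpow_def_of_pos hω, mul_comm])

lemma tiltExp_self_eq_deriv_cgf (h : q ∈ interior (integrableExpSet X μ)) :
    tiltExp μ X q X = deriv (cgf X μ) q := by
  rw [deriv_cgf h]
  rfl

lemma tiltVar_eq_iteratedDeriv_two_cgf (h : q ∈ interior (integrableExpSet X μ)) :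
    tiltVar μ X q = iteratedDeriv 2 (cgf X μ) q := by
  rw [iteratedDeriv_two_cgf_eq_integral h, ← tiltExp_self_eq_deriv_cgf h]
  rfl

lemma hasDerivAt_cgf (h : q ∈ interior (integrableExpSet X μ)) :
    HasDerivAt (cgf X μ) (tiltExp μ X q X) q := by
  rw [tiltExp_self_eq_deriv_cgf h]
  exact (analyticAt_cgf h).differentiableAt.hasDerivAt

lemma hasDerivAt_tiltExp_self (h : q ∈ interior (integrableExpSet X μ)) :
    HasDerivAt (fun t => tiltExp μ X t X) (tiltVar μ X q) q := by
  have hL : (fun t => tiltExp μ X t X) =ᶠ[nhds q] deriv (cgf X μ) :=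
    (isOpen_interior.eventually_mem h).mono fun t ht => tiltExp_self_eq_deriv_cgf ht
  rw [tiltVar_eq_iteratedDeriv_two_cgf h, iteratedDeriv_succ, iteratedDeriv_one]
  exact (analyticAt_cgf h).deriv.differentiableAt.hasDerivAt.congr_of_eventuallyEq hL

lemma tiltVar_nonneg : 0 ≤ tiltVar μ X q :=
  div_nonneg (integral_nonneg fun _ => by positivity) (integral_nonneg fun _ => by positivity)

lemma continuousOn_integral_mul_exp_mul {g : α → ℝ} {a b : ℝ} (hX : AEMeasurable X μ)
    (hg : AEStronglyMeasurable g μ) (ha : Integrable (fun ω => g ω * exp (a * X ω)) μ)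
    (hb : Integrable (fun ω => g ω * exp (b * X ω)) μ) :
    ContinuousOn (fun q => ∫ ω, g ω * exp (q * X ω) ∂μ) (Icc a b) := by
  refine continuousOn_of_dominated (fun q _ => hg.mul (aemeasurable_exp_mul q hX))
    (fun q hq => ae_of_all _ fun ω => ?_) (ha.norm.add hb.norm) (ae_of_all _ fun ω => by fun_prop)
  show |g ω * exp (q * X ω)| ≤ ‖g ω * exp (a * X ω)‖ + ‖g ω * exp (b * X ω)‖
  simp only [norm_mul, Real.norm_eq_abs, abs_mul, abs_exp, ← mul_add]
  exact mul_le_mul_of_nonneg_left (exp_mul_le_exp_mul_add_exp_mul hq (X ω)) (abs_nonneg _)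

lemma continuousOn_mgf_Icc {a b : ℝ} (hX : AEMeasurable X μ)
    (ha : Integrable (fun ω => exp (a * X ω)) μ) (hb : Integrable (fun ω => exp (b * X ω)) μ) :
    ContinuousOn (mgf X μ) (Icc a b) := by
  have h := continuousOn_integral_mul_exp_mul (g := fun _ => 1) hX aestronglyMeasurable_const
    (by simpa using ha) (by simpa using hb)
  simp only [one_mul] at h
  exact h

lemma continuousOn_cgf_Icc [NeZero μ] {a b : ℝ} (hX : AEMeasurable X μ)
    (ha : Integrable (fun ω => exp (a * X ω)) μ) (hb : Integrable (fun ω => exp (b * X ω)) μ) :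
    ContinuousOn (cgf X μ) (Icc a b) :=
  (continuousOn_mgf_Icc hX ha hb).log fun _ hq =>
    (mgf_pos' (NeZero.ne μ) (integrable_exp_mul_of_le_of_le ha hb hq.1 hq.2)).ne'

lemma continuousOn_tiltExp [NeZero μ] {Z : α → ℝ} {a b : ℝ} (hX : AEMeasurable X μ)
    (hZ : AEStronglyMeasurable Z μ)
    (ha : Integrable (fun ω => exp (a * X ω)) μ) (hb : Integrable (fun ω => exp (b * X ω)) μ)
    (hZa : Integrable (fun ω => Z ω * exp (a * X ω)) μ)
    (hZb : Integrable (fun ω => Z ω * exp (b * X ω)) μ) :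
    ContinuousOn (fun q => tiltExp μ X q Z) (Icc a b) :=
  (continuousOn_integral_mul_exp_mul hX hZ hZa hZb).div (continuousOn_mgf_Icc hX ha hb)
    fun _ hq => (mgf_pos' (NeZero.ne μ) (integrable_exp_mul_of_le_of_le ha hb hq.1 hq.2)).ne'

end ProbabilityTheory

theorem fractional_moment_log_variance_identity_general
    {α : Type*} [MeasurableSpace α] (μ : Measure α) [IsProbabilityMeasure μ]
    (Y : α → ℝ) (r s : ℝ) (hr : 0 < r) (hrs : r < s)
    (hpos : ∀ᵐ ω ∂μ, 0 < Y ω)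
    (hYs : Integrable (fun ω => Y ω ^ s) μ)
    (hmom : ∀ q ∈ Set.Icc (0:ℝ) s,
      Integrable (fun ω => (Real.log (Y ω)) ^ 2 * Real.exp (q * Real.log (Y ω))) μ) :
    (∫ ω, Y ω ^ r ∂μ) =
      (∫ ω, Y ω ^ s ∂μ) ^ (r / s) *
        Real.exp (-∫ q in (0:ℝ)..s,
          (1 / s) * min r q * (s - max r q) *
            tiltVar μ (fun ω => Real.log (Y ω)) q) := by
  set X : α → ℝ := fun ω => log (Y ω)
  have hs₀ : 0 < s := hr.trans hrs
  have hE₀ : Integrable (fun ω => exp (0 * X ω)) μ := by simp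
  have hEs : Integrable (fun ω => exp (s * X ω)) μ :=
    hYs.congr (hpos.mono fun ω hω => by
      show Y ω ^ s = exp (s * log (Y ω))
      rw [rpow_def_of_pos hω, mul_comm])
  have hX : AEMeasurable X μ := aemeasurable_of_integrable_exp_mul hs₀.ne hE₀ hEs
  have hIoo : Ioo 0 s ⊆ interior (integrableExpSet X μ) := by
    rw [← interior_Icc]
    exact interior_mono fun q hq => integrable_exp_mul_of_le_of_le hE₀ hEs hq.1 hq.2
  have hXE : ∀ q ∈ Icc 0 s, Integrable (fun ω => X ω * exp (q * X ω)) μ := fun q hq =>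
    (integrable_exp_mul_of_le_of_le hE₀ hEs hq.1 hq.2).mul_of_sq_mul hX.aestronglyMeasurable
      (hmom q hq)
  have hΛ := continuousOn_cgf_Icc hX hE₀ hEs
  have hL := continuousOn_tiltExp hX hX.aestronglyMeasurable hE₀ hEs
    (hXE 0 ⟨le_rfl, hs₀.le⟩) (hXE s ⟨hs₀.le, le_rfl⟩)
  have hV : IntervalIntegrable (tiltVar μ X) volume 0 s :=
    intervalIntegral.intervalIntegrable_deriv_of_nonneg (by rwa [uIcc_of_le hs₀.le])
      (fun q hq => hasDerivAt_tiltExp_self (hIoo (by simpa [hs₀.le] using hq)))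
      fun _ _ => tiltVar_nonneg
  rw [integral_green_mul_eq hr.le hrs.le hs₀ hΛ hL (fun q hq => hasDerivAt_cgf (hIoo hq))
    (fun q hq => hasDerivAt_tiltExp_self (hIoo hq)) hV, cgf_zero,
    integral_rpow_eq_mgf_log hpos, integral_rpow_eq_mgf_log hpos, ← exp_cgf hEs,
    ← exp_cgf (integrable_exp_mul_of_le_of_le hE₀ hEs hr.le hrs.le), ← Real.exp_mul,
    ← Real.exp_add]
  congr 1
  field_simp
  ring

theorem fractional_moment_log_variance_identity
    {α : Type*} [MeasurableSpace α] (μ : Measure α) [IsProbabilityMeasure μ]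
    (Y : α → ℝ) (hY : AEMeasurable Y μ) (r s : ℝ) (hr : 0 < r) (hrs : r < s) (hs : s < 1)
    (hpos : ∀ᵐ ω ∂μ, 0 < Y ω)
    (hYs : Integrable (fun ω => Y ω ^ s) μ)
    (hmom : ∀ q ∈ Set.Icc (0:ℝ) s,
      Integrable (fun ω => (Real.log (Y ω)) ^ 2 * Real.exp (q * Real.log (Y ω))) μ) :
    (∫ ω, Y ω ^ r ∂μ) =
      (∫ ω, Y ω ^ s ∂μ) ^ (r / s) *
        Real.exp (-∫ q in (0:ℝ)..s,
          (1 / s) * min r q * (s - max r q) *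
            tiltVar μ (fun ω => Real.log (Y ω)) q) :=
  fractional_moment_log_variance_identity_general μ Y r s hr hrs hpos hYs hmom
end
end

section
/- Let X be a real-valued random variable on a probability space with measure ℙ, and suppose there are 0 < α < a, ε ∈ (0,1) and β ∈ (0,∞) such that ℙ[|X| ≤ α] ≤ β·√( ℙ[X ≥ a] · ℙ[X ≤ −a] ) + ε. Then 𝔼[X²] ≥ α² · (1 − ε)/(1 + β/2). -/
open MeasureTheory
open scoped ENNReal

theorem mermin_wagner_second_moment_lower_bound
    {α : Type*} [MeasurableSpace α] (μ : Measure α) [IsProbabilityMeasure μ]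
    (X : α → ℝ) (hX : Measurable X) (a α' ε β : ℝ)
    (h0 : 0 < α') (hαa : α' < a) (hε : ε ∈ Set.Ioo (0:ℝ) 1) (hβ : 0 < β)
    (hyp : (μ {ω | |X ω| ≤ α'}).toReal ≤
        β * Real.sqrt ((μ {ω | a ≤ X ω}).toReal * (μ {ω | X ω ≤ -a}).toReal) + ε) :
    ENNReal.ofReal (α' ^ 2 * (1 - ε) / (1 + β / 2)) ≤
      ∫⁻ ω, ENNReal.ofReal ((X ω) ^ 2) ∂μ := by
  obtain ⟨hε0, hε1⟩ := hε
  set I := ∫⁻ ω, ENNReal.ofReal ((X ω) ^ 2) ∂μ with hIdef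
  by_cases hItop : I = ⊤
  · simp [hItop]
  have hmeas2 : Measurable fun ω => ENNReal.ofReal ((X ω) ^ 2) :=
    (hX.pow_const 2).ennreal_ofReal
  have hA : MeasurableSet {ω | a ≤ X ω} := measurableSet_le measurable_const hX
  have hB : MeasurableSet {ω | X ω ≤ -a} := measurableSet_le hX measurable_const
  have hS : MeasurableSet {ω | |X ω| ≤ α'} := measurableSet_le hX.abs measurable_const
  set p := (μ {ω | a ≤ X ω}).toReal with hp
  set q := (μ {ω | X ω ≤ -a}).toReal with hq
  set m := (μ {ω | |X ω| ≤ α'}).toReal with hm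
  -- Bound 1: α'^2 * μ(complement) ≤ I
  have hb1 : ENNReal.ofReal (α' ^ 2) * μ ({ω | |X ω| ≤ α'}ᶜ) ≤ I := by
    refine le_trans (mul_le_mul_right (measure_mono ?_) _)
      (mul_meas_ge_le_lintegral₀ hmeas2.aemeasurable _)
    intro ω hω
    simp only [Set.mem_compl_iff, Set.mem_setOf_eq, not_le] at hω ⊢
    refine ENNReal.ofReal_le_ofReal ?_
    calc α' ^ 2 ≤ |X ω| ^ 2 := pow_le_pow_left₀ h0.le hω.le 2
      _ = (X ω) ^ 2 := sq_abs _
  -- Bound 2: a^2 * (μ A + μ B) ≤ I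
  have hdisj : Disjoint {ω | a ≤ X ω} {ω | X ω ≤ -a} := by
    rw [Set.disjoint_left]
    intro ω h1 h2
    simp only [Set.mem_setOf_eq] at h1 h2
    linarith
  have hb2 : ENNReal.ofReal (a ^ 2) * (μ {ω | a ≤ X ω} + μ {ω | X ω ≤ -a}) ≤ I := by
    have hAle : ENNReal.ofReal (a ^ 2) * μ {ω | a ≤ X ω} ≤
        ∫⁻ ω in {ω | a ≤ X ω}, ENNReal.ofReal ((X ω) ^ 2) ∂μ := by
      rw [← setLIntegral_const]
      refine setLIntegral_mono hmeas2 ?_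
      intro ω hω
      refine ENNReal.ofReal_le_ofReal ?_
      have : a ≤ X ω := hω
      nlinarith
    have hBle : ENNReal.ofReal (a ^ 2) * μ {ω | X ω ≤ -a} ≤
        ∫⁻ ω in {ω | X ω ≤ -a}, ENNReal.ofReal ((X ω) ^ 2) ∂μ := by
      rw [← setLIntegral_const]
      refine setLIntegral_mono hmeas2 ?_
      intro ω hω
      refine ENNReal.ofReal_le_ofReal ?_
      have : X ω ≤ -a := hω
      nlinarith
    calc ENNReal.ofReal (a ^ 2) * (μ {ω | a ≤ X ω} + μ {ω | X ω ≤ -a})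
        = ENNReal.ofReal (a ^ 2) * μ {ω | a ≤ X ω}
          + ENNReal.ofReal (a ^ 2) * μ {ω | X ω ≤ -a} := by ring
      _ ≤ ∫⁻ ω in {ω | a ≤ X ω}, ENNReal.ofReal ((X ω) ^ 2) ∂μ
          + ∫⁻ ω in {ω | X ω ≤ -a}, ENNReal.ofReal ((X ω) ^ 2) ∂μ :=
        add_le_add hAle hBle
      _ = ∫⁻ ω in {ω | a ≤ X ω} ∪ {ω | X ω ≤ -a}, ENNReal.ofReal ((X ω) ^ 2) ∂μ :=
        (lintegral_union hB hdisj).symm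
      _ ≤ I := setLIntegral_le_lintegral _ _
  -- convert to reals
  have hE0 : (0:ℝ) ≤ I.toReal := ENNReal.toReal_nonneg
  have hcompl : (μ ({ω | |X ω| ≤ α'}ᶜ)).toReal = 1 - m := by
    rw [measure_compl hS (measure_ne_top μ _), measure_univ,
      ENNReal.toReal_sub_of_le prob_le_one ENNReal.one_ne_top, ENNReal.toReal_one]
  have hr1 : α' ^ 2 * (1 - m) ≤ I.toReal := by
    have := ENNReal.toReal_mono hItop hb1
    rwa [ENNReal.toReal_mul, ENNReal.toReal_ofReal (sq_nonneg _), hcompl] at this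
  have hr2 : a ^ 2 * (p + q) ≤ I.toReal := by
    have := ENNReal.toReal_mono hItop hb2
    rwa [ENNReal.toReal_mul, ENNReal.toReal_ofReal (sq_nonneg _),
      ENNReal.toReal_add (measure_ne_top μ _) (measure_ne_top μ _)] at this
  have hp0 : (0:ℝ) ≤ p := ENNReal.toReal_nonneg
  have hq0 : (0:ℝ) ≤ q := ENNReal.toReal_nonneg
  set s := Real.sqrt (p * q) with hs
  have hs0 : (0:ℝ) ≤ s := Real.sqrt_nonneg _
  have hamgm : 2 * s ≤ p + q := by
    have h1 := sq_nonneg (Real.sqrt p - Real.sqrt q)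
    have h2 : Real.sqrt p ^ 2 = p := Real.sq_sqrt hp0
    have h3 : Real.sqrt q ^ 2 = q := Real.sq_sqrt hq0
    have h4 : s = Real.sqrt p * Real.sqrt q := Real.sqrt_mul hp0 q
    nlinarith
  -- combine
  rw [← ENNReal.ofReal_toReal hItop]
  refine ENNReal.ofReal_le_ofReal ?_
  rw [div_le_iff₀ (by linarith)]
  have haa : α' ^ 2 ≤ a ^ 2 := by nlinarith
  have hkey : 2 * α' ^ 2 * s ≤ I.toReal := by
    nlinarith [mul_le_mul_of_nonneg_right haa hs0,
      mul_le_mul_of_nonneg_left hamgm (sq_nonneg a)]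
  nlinarith [sq_nonneg α', mul_pos h0 h0]
end

section
/- Let z ∈ ℂ, let V₁,…,V_n be W×W complex Hermitian matrices and T₁,…,T_{n−1} be W×W complex matrices, and let H be the nW×nW block-tridiagonal matrix with diagonal blocks V_j, subdiagonal blocks −T_j and superdiagonal blocks −T_j*. Define Γ₁ := V₁ − z·1 and Γ_j := V_j − z·1 − T_{j−1}·Γ_{j−1}^{−1}·T_{j−1}* for j = 2,…,n. If Γ₁,…,Γ_n are all invertible, then H − z·1 is invertible and the W×W block in position (1,n) of (H − z·1)^{−1} equals Γ₁^{−1}·T₁*·Γ₂^{−1}·T₂*·⋯·Γ_{n−1}^{−1}·T_{n−1}*·Γ_n^{−1}. -/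
open Matrix

noncomputable section

namespace RBM

abbrev Mat (W : ℕ) := Matrix (Fin W) (Fin W) ℂ

/-- The block tridiagonal Hamiltonian with diagonal blocks `V_j`,
subdiagonal blocks `-T_j` and superdiagonal blocks `-T_j*`, acting on
`ℂ^(n·W)` whose coordinates are indexed by pairs (block, inner index). -/
def ham (n W : ℕ) (V T : ℕ → Mat W) : Matrix (Fin n × Fin W) (Fin n × Fin W) ℂ :=
  Matrix.of fun p q =>
    if (p.1 : ℕ) = (q.1 : ℕ) then V (p.1 : ℕ) p.2 q.2
    else if (p.1 : ℕ) = (q.1 : ℕ) + 1 then (-T (q.1 : ℕ)) p.2 q.2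
    else if (q.1 : ℕ) = (p.1 : ℕ) + 1 then (-(T (p.1 : ℕ))ᴴ) p.2 q.2
    else 0

/-- `Γ₁ = V₁ - z`, `Γ_{j+1} = V_{j+1} - z - T_j Γ_j⁻¹ T_j*` (0-indexed). -/
def gammaSeq (W : ℕ) (z : ℂ) (V T : ℕ → Mat W) : ℕ → Mat W
  | 0 => V 0 - z • 1
  | (j + 1) => V (j + 1) - z • 1 - T j * (gammaSeq W z V T j)⁻¹ * (T j)ᴴ

/-! Split off the last diagonal block of `H - z`. By induction, the last diagonal block of the
inverse of the truncated matrix is `Γ_{n-1}⁻¹`, so the Schur complement of the truncated matrix is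
`V_n - z - T_{n-1} Γ_{n-1}⁻¹ T_{n-1}* = Γ_n`. The block-inverse formula then makes `Γ_n⁻¹` the new
last diagonal block, and multiplies the top-right block of the truncated inverse by
`T_{n-1}* Γ_n⁻¹`. -/

section BlockMatrix

variable {m : ℕ} {ι κ ν R : Type*}

def blockCol [Zero R] (i : Fin m) (X : Matrix ι ν R) : Matrix (Fin m × ι) ν R :=
  of fun p b => if p.1 = i then X p.2 b else 0

def blockRow [Zero R] (i : Fin m) (X : Matrix ν ι R) : Matrix ν (Fin m × ι) R :=
  of fun a q => if q.1 = i then X a q.2 else 0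

variable [Fintype ι] [NonUnitalNonAssocSemiring R]

lemma mul_blockCol (A : Matrix κ (Fin m × ι) R) (i : Fin m) (X : Matrix ι ν R) :
    A * blockCol i X = A.submatrix id (Prod.mk i) * X := by
  ext p b
  simp [mul_apply, Fintype.sum_prod_type, blockCol, mul_ite]

lemma blockRow_mul (X : Matrix ν ι R) (i : Fin m) (A : Matrix (Fin m × ι) κ R) :
    blockRow i X * A = X * A.submatrix (Prod.mk i) id := by
  ext p b
  simp [mul_apply, Fintype.sum_prod_type, blockRow, ite_mul]

end BlockMatrix

section SchurComplement

variable {l m α : Type*} [Fintype l] [Fintype m] [DecidableEq l] [DecidableEq m] [CommRing α]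

lemma isUnit_fromBlocks_of_isUnit_schur {A : Matrix l l α} {B : Matrix l m α}
    {C : Matrix m l α} {D : Matrix m m α} (hA : IsUnit A) (hS : IsUnit (D - C * A⁻¹ * B)) :
    IsUnit (fromBlocks A B C D) := by
  obtain ⟨_⟩ := hA.nonempty_invertible
  rw [← invOf_eq_nonsing_inv] at hS
  exact isUnit_fromBlocks_iff_of_invertible₁₁.mpr hS

lemma inv_fromBlocks_of_isUnit_schur {A : Matrix l l α} (B : Matrix l m α) (C : Matrix m l α)
    (D : Matrix m m α) (hA : IsUnit A) (hS : IsUnit (D - C * A⁻¹ * B)) :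
    (fromBlocks A B C D)⁻¹ =
      fromBlocks (A⁻¹ + A⁻¹ * B * (D - C * A⁻¹ * B)⁻¹ * C * A⁻¹)
        (-(A⁻¹ * B * (D - C * A⁻¹ * B)⁻¹)) (-((D - C * A⁻¹ * B)⁻¹ * C * A⁻¹))
        (D - C * A⁻¹ * B)⁻¹ := by
  obtain ⟨_⟩ := hA.nonempty_invertible
  rw [← invOf_eq_nonsing_inv A] at hS ⊢
  obtain ⟨_⟩ := hS.nonempty_invertible
  let := fromBlocks₁₁Invertible A B C D
  rw [← invOf_eq_nonsing_inv, invOf_fromBlocks₁₁_eq, ← invOf_eq_nonsing_inv]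

end SchurComplement

lemma fromBlocks_sub_smul_one {l m α : Type*} [DecidableEq l] [DecidableEq m] [Ring α]
    (c : α) (A : Matrix l l α) (B : Matrix l m α) (C : Matrix m l α) (D : Matrix m m α) :
    fromBlocks A B C D - c • 1 = fromBlocks (A - c • 1) B C (D - c • 1) := by
  rw [← fromBlocks_one, fromBlocks_smul, sub_eq_add_neg, fromBlocks_neg, fromBlocks_add]
  simp [sub_eq_add_neg]

def prodSumLastEquiv (n : ℕ) (ι : Type*) : Fin n × ι ⊕ ι ≃ Fin (n + 1) × ι where
  toFun := Sum.elim (fun p => (p.1.castSucc, p.2)) (Prod.mk (Fin.last n))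
  invFun p := if h : (p.1 : ℕ) < n then Sum.inl (⟨p.1, h⟩, p.2) else Sum.inr p.2
  left_inv := by rintro (⟨i, a⟩ | a) <;> simp
  right_inv := by
    rintro ⟨i, a⟩
    by_cases h : (i : ℕ) < n
    · simp [h]
    · simp [h, Fin.ext_iff]; omega

lemma ham_succ_submatrix (n W : ℕ) (V T : ℕ → Mat W) :
    (ham (n + 2) W V T).submatrix (prodSumLastEquiv (n + 1) (Fin W))
        (prodSumLastEquiv (n + 1) (Fin W)) =
      fromBlocks (ham (n + 1) W V T) (blockCol (Fin.last n) (-(T n)ᴴ))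
        (blockRow (Fin.last n) (-T n)) (V (n + 1)) := by
  ext (⟨i, a⟩ | a) (⟨j, b⟩ | b) <;>
    simp [ham, blockCol, blockRow, prodSumLastEquiv, Fin.ext_iff]
  all_goals grind

lemma ham_succ_sub_submatrix (n W : ℕ) (z : ℂ) (V T : ℕ → Mat W) :
    (ham (n + 2) W V T - z • 1).submatrix (prodSumLastEquiv (n + 1) (Fin W))
        (prodSumLastEquiv (n + 1) (Fin W)) =
      fromBlocks (ham (n + 1) W V T - z • 1) (blockCol (Fin.last n) (-(T n)ᴴ))
        (blockRow (Fin.last n) (-T n)) (V (n + 1) - z • 1) := by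
  simp only [submatrix_sub, submatrix_smul, Pi.sub_apply, Pi.smul_apply, submatrix_one_equiv,
    ham_succ_submatrix, fromBlocks_sub_smul_one]

def gammaChain (W : ℕ) (z : ℂ) (V T : ℕ → Mat W) (n : ℕ) : Mat W :=
  ((List.range n).map fun j => (gammaSeq W z V T j)⁻¹ * (T j)ᴴ).prod * (gammaSeq W z V T n)⁻¹

section Green

variable {W : ℕ} {z : ℂ} {V T : ℕ → Mat W}

lemma gammaChain_succ (n : ℕ) :
    gammaChain W z V T (n + 1) =
      gammaChain W z V T n * (T n)ᴴ * (gammaSeq W z V T (n + 1))⁻¹ := by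
  simp only [gammaChain, List.range_succ, List.map_append, List.prod_append, List.map_singleton,
    List.prod_singleton, Matrix.mul_assoc]

lemma ham_one_sub_eq_submatrix :
    ham 1 W V T - z • 1 =
      (gammaSeq W z V T 0).submatrix (Equiv.uniqueProd (Fin W) (Fin 1))
        (Equiv.uniqueProd (Fin W) (Fin 1)) := by
  ext ⟨i, a⟩ ⟨j, b⟩
  simp [ham, gammaSeq, one_apply, Fin.fin_one_eq_zero]

lemma schur_ham_sub_eq_gammaSeq {n : ℕ}
    (hcorner : (ham (n + 1) W V T - z • 1)⁻¹.submatrix (Prod.mk (Fin.last n))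
      (Prod.mk (Fin.last n)) = (gammaSeq W z V T n)⁻¹) :
    V (n + 1) - z • 1 - blockRow (Fin.last n) (-T n) * (ham (n + 1) W V T - z • 1)⁻¹ *
      blockCol (Fin.last n) (-(T n)ᴴ) = gammaSeq W z V T (n + 1) := by
  rw [Matrix.mul_assoc, mul_blockCol, ← Matrix.mul_assoc, blockRow_mul, submatrix_submatrix,
    Function.id_comp, Function.comp_id, hcorner, gammaSeq]
  simp [Matrix.mul_assoc]

theorem isUnit_ham_sub_and_inv_lastBlocks (n : ℕ) (hΓ : ∀ j ≤ n, IsUnit (gammaSeq W z V T j)) :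
    IsUnit (ham (n + 1) W V T - z • 1) ∧
    (ham (n + 1) W V T - z • 1)⁻¹.submatrix (Prod.mk (Fin.last n)) (Prod.mk (Fin.last n)) =
      (gammaSeq W z V T n)⁻¹ ∧
    (ham (n + 1) W V T - z • 1)⁻¹.submatrix (Prod.mk 0) (Prod.mk (Fin.last n)) =
      gammaChain W z V T n := by
  induction n with
  | zero =>
    refine ⟨?_, ?_, ?_⟩
    · rw [ham_one_sub_eq_submatrix, isUnit_submatrix_equiv]
      exact hΓ 0 le_rfl
    · rw [ham_one_sub_eq_submatrix, inv_submatrix_equiv]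
      rfl
    · rw [ham_one_sub_eq_submatrix, inv_submatrix_equiv]
      simp [gammaChain]
  | succ n ih =>
    obtain ⟨hA, hcorner, htop⟩ := ih fun j hj => hΓ j (by omega)
    have hS := schur_ham_sub_eq_gammaSeq hcorner
    have hSunit := hS ▸ hΓ (n + 1) le_rfl
    set e := prodSumLastEquiv (n + 1) (Fin W)
    have hsplit := ham_succ_sub_submatrix n W z V T
    have hinv := inv_submatrix_equiv (ham (n + 2) W V T - z • 1) e e
    rw [hsplit, inv_fromBlocks_of_isUnit_schur _ _ _ hA hSunit, hS] at hinv
    refine ⟨?_, congrArg toBlocks₂₂ hinv.symm, ?_⟩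
    · rw [← isUnit_submatrix_equiv e, hsplit]
      exact isUnit_fromBlocks_of_isUnit_schur hA hSunit
    · calc _ = (toBlocks₁₂ ((ham (n + 2) W V T - z • 1)⁻¹.submatrix e e)).submatrix
              (Prod.mk 0) id := by
            ext a b
            simp [toBlocks₁₂, e, prodSumLastEquiv]
        _ = -((ham (n + 1) W V T - z • 1)⁻¹.submatrix (Prod.mk 0) (Prod.mk (Fin.last n)) *
              -(T n)ᴴ * (gammaSeq W z V T (n + 1))⁻¹) := by
            rw [← hinv, toBlocks_fromBlocks₁₂, mul_blockCol]
            ext a b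
            simp [mul_apply]
        _ = gammaChain W z V T (n + 1) := by
          rw [htop, gammaChain_succ]
          simp

end Green

theorem green_function_factorization (n W : ℕ) (hn : 0 < n) (z : ℂ) (V T : ℕ → Mat W)
    (hΓ : ∀ j < n, IsUnit (gammaSeq W z V T j)) :
    IsUnit (ham n W V T - z • 1) ∧
    ∀ a b : Fin W,
      (ham n W V T - z • 1)⁻¹ (⟨0, hn⟩, a) (⟨n - 1, by omega⟩, b) =
        (((List.range (n - 1)).map
            (fun j => (gammaSeq W z V T j)⁻¹ * (T j)ᴴ)).prod *
          (gammaSeq W z V T (n - 1))⁻¹) a b := by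
  obtain ⟨m, rfl⟩ : ∃ m, n = m + 1 := ⟨n - 1, by omega⟩
  obtain ⟨hunit, -, htop⟩ := isUnit_ham_sub_and_inv_lastBlocks m fun j hj => hΓ j (by omega)
  exact ⟨hunit, fun a b => congrFun (congrFun htop a) b⟩

end RBM
end
end

section
/- Fix K > 1 and a smooth function φ:[0,∞)→[0,1] with 𝟙_{[0,K]} ≤ φ ≤ 𝟙_{[0,2K]} and |φ′| ≤ 𝟙_{[0,2K]}. There exists c > 0, depending only on K and φ, such that for all W ≥ 1, all δ > 0 with δ·W ≤ c, all Hermitian W×W matrices G, G̃, all real z with |z| ≤ √W, and each sign σ ∈ {+1,−1}, the map η^σ : Mat_W(ℂ) → Mat_W(ℂ) defined by η^σ(A) := exp( σ·δ·γ(G,G̃)·φ(‖A‖²_HS/W)·φ(‖G + z·1 + A·G̃·A*‖²_HS/W²) ) · A, where γ(G,G̃) := φ(‖G‖²_HS/W²)·φ(‖G̃‖²_HS/W²), is injective. -/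
/-!
If `η(A) = η(B)` with exponent `f`, then `B = e^t A` for `t = f(A) - f(B)`, and `|t| ≤ 2δ`.
When `f(A) ≠ 0`, the support of `φ` confines `‖A‖²_HS ≤ 2KW`, `‖G̃‖²_HS ≤ 2KW²` and
`‖G + z + A G̃ A*‖²_HS ≤ 2KW²`. With these bounds, and since `φ` is 1-Lipschitz, `f` varies
along the ray `s ↦ e^s A` at rate `O(δ (K + K² W))`, which is `< 1/2` once `δ W ≤ c`.
So `|t| = |f(A) - f(e^t A)| ≤ |t| / 2`, forcing `t = 0`.
-/

open Matrix

noncomputable section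

namespace RBM

/-- Squared Hilbert–Schmidt norm `‖M‖²_HS = tr(M*M)`. -/
def hsSq {W : ℕ} (M : Mat W) : ℝ := (Matrix.trace (Mᴴ * M)).re

end RBM

open Set

lemma abs_sq_norm_sub_sq_norm_le {E : Type*} [SeminormedAddCommGroup E] (x y : E) :
    |‖y‖ ^ 2 - ‖x‖ ^ 2| ≤ (2 * ‖x‖ + ‖y - x‖) * ‖y - x‖ := by
  rw [sq_sub_sq, abs_mul, abs_of_nonneg (by positivity)]
  exact mul_le_mul (by linarith [norm_le_norm_add_norm_sub' y x]) (abs_norm_sub_norm_le y x)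
    (abs_nonneg _) (by positivity)

lemma abs_mul_sub_mul_le {a b c d : ℝ} (hb : |b| ≤ 1) (hc : |c| ≤ 1) :
    |a * b - c * d| ≤ |a - c| + |b - d| := by
  rw [show a * b - c * d = (a - c) * b + c * (b - d) by ring]
  refine (abs_add_le _ _).trans ?_
  rw [abs_mul, abs_mul]
  gcongr
  · exact mul_le_of_le_one_right (abs_nonneg _) hb
  · exact mul_le_of_le_one_left (abs_nonneg _) hc

theorem injective_exp_smul_of_abs_sub_le {V : Type*} [AddCommGroup V] [Module ℝ V]
    (g : V → ℝ) {τ L : ℝ} (hL : L < 1) (hg : ∀ v, |g v| ≤ τ)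
    (hstep : ∀ v t, |t| ≤ 2 * τ → g v ≠ 0 → |g (Real.exp t • v) - g v| ≤ L * |t|) :
    Function.Injective fun v => Real.exp (g v) • v := by
  have key : ∀ v w, Real.exp (g v) • v = Real.exp (g w) • w → g v ≠ 0 → v = w := by
    intro v w h hv
    set t := g v - g w with ht
    have hw : w = Real.exp t • v := by
      rw [ht, sub_eq_neg_add, Real.exp_add, mul_smul, h, smul_smul, ← Real.exp_add,
        neg_add_cancel, Real.exp_zero, one_smul]
    have htτ : |t| ≤ 2 * τ := by linarith [abs_sub (g v) (g w), hg v, hg w]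
    have htL : |t| ≤ L * |t| := by
      simpa only [← hw, abs_sub_comm (g w), ← ht] using hstep v t htτ hv
    have ht0 : t = 0 := abs_nonpos_iff.mp (by nlinarith [abs_nonneg t])
    rw [hw, ht0, Real.exp_zero, one_smul]
  intro v w h
  by_cases hv : g v = 0
  · by_cases hw : g w = 0
    · simpa only [hv, hw, Real.exp_zero, one_smul] using h
    · exact (key w v h.symm hw).symm
  · exact key v w h hv

lemma LipschitzOnWith.abs_comp_sq_norm_div_sub_le {φ : ℝ → ℝ} (hφ : LipschitzOnWith 1 φ (Ici 0))
    {E : Type*} [SeminormedAddCommGroup E] (x y : E) {w : ℝ} (hw : 0 < w) :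
    |φ (‖y‖ ^ 2 / w) - φ (‖x‖ ^ 2 / w)| ≤ (2 * ‖x‖ + ‖y - x‖) * ‖y - x‖ / w := by
  have h := hφ.dist_le_mul (‖y‖ ^ 2 / w) (by simp; positivity) (‖x‖ ^ 2 / w) (by simp; positivity)
  rw [Real.dist_eq, Real.dist_eq, NNReal.coe_one, one_mul, ← sub_div, abs_div,
    abs_of_pos hw] at h
  exact h.trans (div_le_div_of_nonneg_right (abs_sq_norm_sub_sq_norm_le x y) hw.le)

lemma LipschitzOnWith.abs_comp_sq_norm_exp_smul_sub_le {φ : ℝ → ℝ}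
    (hφ : LipschitzOnWith 1 φ (Ici 0)) {E : Type*} [SeminormedAddCommGroup E] [NormedSpace ℝ E]
    (x : E) {w R t : ℝ} (hw : 0 < w) (ht : |t| ≤ 1 / 2) (hx : ‖x‖ ^ 2 ≤ R * w) :
    |φ (‖Real.exp t • x‖ ^ 2 / w) - φ (‖x‖ ^ 2 / w)| ≤ 6 * R * |t| := by
  have hd : ‖Real.exp t • x - x‖ ≤ 2 * |t| * ‖x‖ := by
    rw [show Real.exp t • x - x = (Real.exp t - 1) • x by rw [sub_smul, one_smul], norm_smul,
      Real.norm_eq_abs]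
    gcongr
    exact Real.abs_exp_sub_one_le (by linarith)
  refine (hφ.abs_comp_sq_norm_div_sub_le x _ hw).trans ?_
  rw [div_le_iff₀ hw]
  calc (2 * ‖x‖ + ‖Real.exp t • x - x‖) * ‖Real.exp t • x - x‖
      ≤ (2 * ‖x‖ + ‖x‖) * (2 * |t| * ‖x‖) := by
        gcongr
        exact hd.trans (by nlinarith [norm_nonneg x])
    _ = 6 * |t| * ‖x‖ ^ 2 := by ring
    _ ≤ 6 * |t| * (R * w) := by gcongr
    _ = 6 * R * |t| * w := by ring

lemma Matrix.real_smul_mul_mul_conjTranspose_smul {m n : Type*} [Fintype n] (r : ℝ)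
    (A : Matrix m n ℂ) (B : Matrix n n ℂ) : (r • A) * B * (r • A)ᴴ = r ^ 2 • (A * B * Aᴴ) := by
  simp [Matrix.conjTranspose_smul, Matrix.smul_mul, Matrix.mul_smul, smul_smul, sq]

section Frobenius

attribute [local instance] Matrix.frobeniusNormedAddCommGroup Matrix.frobeniusNormedSpace

lemma Matrix.frobenius_norm_mul_mul_conjTranspose_le {m n : Type*} [Fintype m] [Fintype n]
    (A : Matrix m n ℂ) (B : Matrix n n ℂ) : ‖A * B * Aᴴ‖ ≤ ‖A‖ ^ 2 * ‖B‖ := by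
  calc ‖A * B * Aᴴ‖ ≤ ‖A‖ * ‖B‖ * ‖Aᴴ‖ := by
        grw [Matrix.frobenius_norm_mul, Matrix.frobenius_norm_mul]
    _ = ‖A‖ ^ 2 * ‖B‖ := by rw [Matrix.frobenius_norm_conjTranspose]; ring

lemma LipschitzOnWith.abs_comp_sq_norm_add_conj_exp_smul_sub_le {φ : ℝ → ℝ}
    (hφ : LipschitzOnWith 1 φ (Ici 0)) {n : Type*} [Fintype n] (H A B : Matrix n n ℂ)
    {w R t : ℝ} (hw : 0 < w) (ht : |t| ≤ 1 / 2) (hA : ‖A‖ ^ 2 ≤ R * w)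
    (hB : ‖B‖ ^ 2 ≤ R * w ^ 2) (hX : ‖H + A * B * Aᴴ‖ ^ 2 ≤ R * w ^ 2) :
    |φ (‖H + (Real.exp t • A) * B * (Real.exp t • A)ᴴ‖ ^ 2 / w ^ 2)
        - φ (‖H + A * B * Aᴴ‖ ^ 2 / w ^ 2)|
      ≤ (8 * R ^ 2 * w + 16 * R ^ 3 * |t| * w ^ 2) * |t| := by
  set X := H + A * B * Aᴴ with hXdef
  have hdiff : H + (Real.exp t • A) * B * (Real.exp t • A)ᴴ - X
      = (Real.exp (2 * t) - 1) • (A * B * Aᴴ) := by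
    rw [hXdef, Matrix.real_smul_mul_mul_conjTranspose_smul, sq, ← Real.exp_add, ← two_mul,
      sub_smul, one_smul]
    abel
  have hexp : |Real.exp (2 * t) - 1| ≤ 4 * |t| := by
    have := Real.abs_exp_sub_one_le (x := 2 * t) (by rw [abs_mul, abs_two]; linarith)
    rw [abs_mul, abs_two] at this
    linarith
  have hd : ‖H + (Real.exp t • A) * B * (Real.exp t • A)ᴴ - X‖ ≤ 4 * |t| * (‖A‖ ^ 2 * ‖B‖) := by
    rw [hdiff, norm_smul, Real.norm_eq_abs]
    exact mul_le_mul hexp (Matrix.frobenius_norm_mul_mul_conjTranspose_le A B) (norm_nonneg _)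
      (by positivity)
  -- AM-GM from the two square bounds
  have hXB : ‖X‖ * ‖B‖ ≤ R * w ^ 2 := by nlinarith [sq_nonneg (‖X‖ - ‖B‖)]
  have hA2B : (‖A‖ ^ 2 * ‖B‖) ^ 2 ≤ (R * w) ^ 2 * (R * w ^ 2) := by
    rw [mul_pow]; gcongr
  have hRw : 0 ≤ R * w := (sq_nonneg _).trans hA
  refine (hφ.abs_comp_sq_norm_div_sub_le X _ (by positivity)).trans ?_
  rw [div_le_iff₀ (by positivity)]
  calc (2 * ‖X‖ + ‖_ - X‖) * ‖_ - X‖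
      ≤ (2 * ‖X‖ + 4 * |t| * (‖A‖ ^ 2 * ‖B‖)) * (4 * |t| * (‖A‖ ^ 2 * ‖B‖)) := by gcongr
    _ = 8 * |t| * ‖A‖ ^ 2 * (‖X‖ * ‖B‖) + 16 * |t| ^ 2 * (‖A‖ ^ 2 * ‖B‖) ^ 2 := by ring
    _ ≤ 8 * |t| * (R * w) * (R * w ^ 2) + 16 * |t| ^ 2 * ((R * w) ^ 2 * (R * w ^ 2)) := by
        gcongr
    _ = (8 * R ^ 2 * w + 16 * R ^ 3 * |t| * w ^ 2) * |t| * w ^ 2 := by ring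

end Frobenius

namespace RBM

def cutoffPair (φ : ℝ → ℝ) {W : ℕ} (H Gt A : Mat W) : ℝ :=
  φ (hsSq A / (W : ℝ)) * φ (hsSq (H + A * Gt * Aᴴ) / (W : ℝ) ^ 2)

section Frobenius

attribute [local instance] Matrix.frobeniusNormedAddCommGroup Matrix.frobeniusNormedSpace

lemma hsSq_eq_norm_sq {W : ℕ} (M : Mat W) : hsSq M = ‖M‖ ^ 2 := by
  rw [Matrix.frobenius_norm_def, ← Real.sqrt_eq_rpow, Real.sq_sqrt (by positivity),
    Finset.sum_comm]
  simp [hsSq, Matrix.trace, Matrix.mul_apply, Complex.re_sum, ← Complex.normSq_eq_norm_sq,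
    Complex.normSq_apply]

lemma hsSq_nonneg {W : ℕ} (M : Mat W) : 0 ≤ hsSq M := by
  rw [hsSq_eq_norm_sq]
  positivity

lemma abs_cutoffPair_exp_smul_sub_le {φ : ℝ → ℝ} {R : ℝ} (hφ : LipschitzOnWith 1 φ (Ici 0))
    (hφ1 : ∀ x, 0 ≤ x → |φ x| ≤ 1) (hsupp : ∀ x, 0 ≤ x → φ x ≠ 0 → x ≤ R)
    {W : ℕ} (hW : 0 < W) {H Gt A : Mat W} {t : ℝ}
    (ht : |t| ≤ 1 / 2) (hGt : hsSq Gt ≤ R * (W : ℝ) ^ 2) (hne : cutoffPair φ H Gt A ≠ 0) :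
    |cutoffPair φ H Gt (Real.exp t • A) - cutoffPair φ H Gt A|
      ≤ (6 * R + 8 * R ^ 2 * W + 16 * R ^ 3 * |t| * (W : ℝ) ^ 2) * |t| := by
  have hw : (0 : ℝ) < W := by exact_mod_cast hW
  have hle_of_ne {x w : ℝ} (hx : 0 ≤ x) (hw : 0 < w) (h : φ (x / w) ≠ 0) : x ≤ R * w :=
    (div_le_iff₀ hw).mp (hsupp _ (by positivity) h)
  simp only [cutoffPair, hsSq_eq_norm_sq] at hne ⊢
  rw [hsSq_eq_norm_sq] at hGt
  obtain ⟨hpA, hqA⟩ := mul_ne_zero_iff.mp hne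
  have hA := hle_of_ne (by positivity) hw hpA
  have hX := hle_of_ne (by positivity) (by positivity) hqA
  calc _ ≤ |φ (‖Real.exp t • A‖ ^ 2 / W) - φ (‖A‖ ^ 2 / W)|
        + |φ (‖H + (Real.exp t • A) * Gt * (Real.exp t • A)ᴴ‖ ^ 2 / (W : ℝ) ^ 2)
          - φ (‖H + A * Gt * Aᴴ‖ ^ 2 / (W : ℝ) ^ 2)| :=
        abs_mul_sub_mul_le (hφ1 _ (by positivity)) (hφ1 _ (by positivity))
    _ ≤ 6 * R * |t| + (8 * R ^ 2 * W + 16 * R ^ 3 * |t| * (W : ℝ) ^ 2) * |t| :=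
        add_le_add (hφ.abs_comp_sq_norm_exp_smul_sub_le A hw ht hA)
          (hφ.abs_comp_sq_norm_add_conj_exp_smul_sub_le H A Gt hw ht hA hGt hX)
    _ = _ := by ring

end Frobenius

lemma abs_cutoffPair_le_one {φ : ℝ → ℝ} (hφ1 : ∀ x, 0 ≤ x → |φ x| ≤ 1) {W : ℕ}
    (H Gt A : Mat W) : |cutoffPair φ H Gt A| ≤ 1 := by
  rw [cutoffPair, abs_mul]
  exact mul_le_one₀ (hφ1 _ (by have := hsSq_nonneg A; positivity)) (abs_nonneg _)
    (hφ1 _ (by have := hsSq_nonneg (H + A * Gt * Aᴴ); positivity))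

lemma injective_exp_smul_mul_cutoffPair {φ : ℝ → ℝ} {R : ℝ} (hφ : LipschitzOnWith 1 φ (Ici 0))
    (hφ1 : ∀ x, 0 ≤ x → |φ x| ≤ 1) (hsupp : ∀ x, 0 ≤ x → φ x ≠ 0 → x ≤ R) {W : ℕ} (hW : 0 < W)
    (H Gt : Mat W) {κ δ : ℝ} (hκ : |κ| ≤ δ) (hGt : κ ≠ 0 → hsSq Gt ≤ R * (W : ℝ) ^ 2)
    (hδ : δ ≤ 1 / 4) (hrate : δ * (6 * R + 8 * R ^ 2 * W + 32 * R ^ 3 * δ * (W : ℝ) ^ 2) ≤ 1 / 2) :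
    Function.Injective fun A : Mat W => Real.exp (κ * cutoffPair φ H Gt A) • A := by
  have hδ0 : 0 ≤ δ := (abs_nonneg κ).trans hκ
  refine injective_exp_smul_of_abs_sub_le _ (τ := δ) (L := 1 / 2) (by norm_num) (fun A => ?_)
    fun A t ht hne => ?_
  · rw [abs_mul]
    nlinarith [abs_nonneg κ, abs_cutoffPair_le_one hφ1 H Gt A]
  obtain ⟨hκ0, hP⟩ := mul_ne_zero_iff.mp hne
  have hR : 0 ≤ R :=
    nonneg_of_mul_nonneg_left ((hsSq_nonneg Gt).trans (hGt hκ0)) (by positivity)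
  rw [← mul_sub, abs_mul]
  calc |κ| * |cutoffPair φ H Gt (Real.exp t • A) - cutoffPair φ H Gt A|
      ≤ δ * ((6 * R + 8 * R ^ 2 * W + 16 * R ^ 3 * |t| * (W : ℝ) ^ 2) * |t|) :=
        mul_le_mul hκ (abs_cutoffPair_exp_smul_sub_le hφ hφ1 hsupp hW (by linarith) (hGt hκ0) hP)
          (abs_nonneg _) hδ0
    _ ≤ δ * ((6 * R + 8 * R ^ 2 * W + 16 * R ^ 3 * (2 * δ) * (W : ℝ) ^ 2) * |t|) := by gcongr
    _ ≤ 1 / 2 * |t| := by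
        rw [← mul_assoc]
        exact mul_le_mul_of_nonneg_right (by linarith) (abs_nonneg t)

lemma rate_le_half_of_mul_le {K δ : ℝ} {W : ℕ} (hK : 1 < K) (hW : 1 ≤ W) (hδ : 0 < δ)
    (hδW : δ * W ≤ 1 / (100 * K ^ 2)) :
    δ ≤ 1 / 4 ∧
      δ * (6 * (2 * K) + 8 * (2 * K) ^ 2 * W + 32 * (2 * K) ^ 3 * δ * (W : ℝ) ^ 2) ≤ 1 / 2 := by
  have hW1 : (1 : ℝ) ≤ W := by exact_mod_cast hW
  set e := δ * W * K ^ 2 with he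
  have he0 : 0 ≤ e := by positivity
  have he1 : e ≤ 1 / 100 := by
    rw [le_div_iff₀ (by positivity)] at hδW
    linarith
  have hδe : δ * K ≤ e := by
    rw [he, mul_assoc δ]
    exact mul_le_mul_of_nonneg_left (by nlinarith) hδ.le
  have hquad : δ ^ 2 * K ^ 3 * W ^ 2 ≤ e ^ 2 := by
    rw [he]
    have : K ^ 3 ≤ K ^ 4 := pow_le_pow_right₀ hK.le (by norm_num)
    nlinarith [mul_le_mul_of_nonneg_left this (by positivity : (0 : ℝ) ≤ δ ^ 2 * W ^ 2)]
  constructor <;> nlinarith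

theorem eta_injective_general (K : ℝ) (hK : 1 < K) (φ : ℝ → ℝ)
    (hφ : ContDiff ℝ (⊤ : ℕ∞) φ)
    (hφ01 : ∀ x, 0 ≤ x → 0 ≤ φ x ∧ φ x ≤ 1)
    (hupp : ∀ x, 0 ≤ x → φ x ≤ Set.indicator (Set.Icc (0:ℝ) (2 * K)) (fun _ => 1) x)
    (hderiv : ∀ x, 0 ≤ x →
      |deriv φ x| ≤ Set.indicator (Set.Icc (0:ℝ) (2 * K)) (fun _ => 1) x) :
    ∃ c > (0:ℝ), ∀ W : ℕ, 1 ≤ W → ∀ δ : ℝ, 0 < δ → δ * W ≤ c →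
    ∀ G Gt : Mat W, G.IsHermitian → Gt.IsHermitian →
    ∀ z : ℝ, |z| ≤ Real.sqrt W → ∀ σ : ℝ, σ = 1 ∨ σ = -1 →
    Function.Injective (fun A : Mat W =>
      Real.exp (σ * δ * (φ (hsSq G / (W : ℝ) ^ 2) * φ (hsSq Gt / (W : ℝ) ^ 2)) *
          φ (hsSq A / (W : ℝ)) *
          φ (hsSq (G + (z : ℂ) • 1 + A * Gt * Aᴴ) / (W : ℝ) ^ 2)) • A) := by
  have hlip : LipschitzOnWith 1 φ (Ici 0) :=
    (convex_Ici 0).lipschitzOnWith_of_nnnorm_deriv_le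
      (fun x _ => (hφ.differentiable (by simp)).differentiableAt) fun x hx => by
        rw [← NNReal.coe_le_coe, coe_nnnorm, Real.norm_eq_abs, NNReal.coe_one]
        exact (hderiv x hx).trans (indicator_apply_le' (fun _ => le_rfl) fun _ => zero_le_one)
  have hφ1 : ∀ x, 0 ≤ x → |φ x| ≤ 1 := fun x hx =>
    abs_le.mpr ⟨by linarith [(hφ01 x hx).1], (hφ01 x hx).2⟩
  have hsupp : ∀ x, 0 ≤ x → φ x ≠ 0 → x ≤ 2 * K := fun x hx hne =>
    (mem_of_indicator_ne_zero (((hφ01 x hx).1.lt_of_ne' hne).trans_le (hupp x hx)).ne').2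
  refine ⟨1 / (100 * K ^ 2), by positivity, fun W hW δ hδ hδW G Gt _ _ z _ σ hσ => ?_⟩
  set κ := σ * δ * (φ (hsSq G / (W : ℝ) ^ 2) * φ (hsSq Gt / (W : ℝ) ^ 2)) with hκ
  have hκδ : |κ| ≤ δ := by
    have hσ1 : |σ| = 1 := by rcases hσ with rfl | rfl <;> simp
    rw [hκ, abs_mul, abs_mul, hσ1, one_mul, abs_of_pos hδ, abs_mul]
    exact mul_le_of_le_one_right hδ.le (mul_le_one₀ (hφ1 _ (by have := hsSq_nonneg G; positivity))
      (abs_nonneg _) (hφ1 _ (by have := hsSq_nonneg Gt; positivity)))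
  have hGt (hκ0 : κ ≠ 0) : hsSq Gt ≤ 2 * K * (W : ℝ) ^ 2 :=
    (div_le_iff₀ (by positivity)).mp (hsupp _ (by have := hsSq_nonneg Gt; positivity)
      (mul_ne_zero_iff.mp (mul_ne_zero_iff.mp hκ0).2).2)
  obtain ⟨hδ4, hrate⟩ := rate_le_half_of_mul_le hK hW hδ hδW
  simp_rw [mul_assoc κ]
  exact injective_exp_smul_mul_cutoffPair hlip hφ1 hsupp hW _ _ hκδ hGt hδ4 hrate

theorem eta_injective (K : ℝ) (hK : 1 < K) (φ : ℝ → ℝ)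
    (hφ : ContDiff ℝ (⊤ : ℕ∞) φ)
    (hφ01 : ∀ x, 0 ≤ x → 0 ≤ φ x ∧ φ x ≤ 1)
    (hlow : ∀ x, 0 ≤ x → Set.indicator (Set.Icc (0:ℝ) K) (fun _ => 1) x ≤ φ x)
    (hupp : ∀ x, 0 ≤ x → φ x ≤ Set.indicator (Set.Icc (0:ℝ) (2 * K)) (fun _ => 1) x)
    (hderiv : ∀ x, 0 ≤ x →
      |deriv φ x| ≤ Set.indicator (Set.Icc (0:ℝ) (2 * K)) (fun _ => 1) x) :
    ∃ c > (0:ℝ), ∀ W : ℕ, 1 ≤ W → ∀ δ : ℝ, 0 < δ → δ * W ≤ c →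
    ∀ G Gt : Mat W, G.IsHermitian → Gt.IsHermitian →
    ∀ z : ℝ, |z| ≤ Real.sqrt W → ∀ σ : ℝ, σ = 1 ∨ σ = -1 →
    Function.Injective (fun A : Mat W =>
      Real.exp (σ * δ * (φ (hsSq G / (W : ℝ) ^ 2) * φ (hsSq Gt / (W : ℝ) ^ 2)) *
          φ (hsSq A / (W : ℝ)) *
          φ (hsSq (G + (z : ℂ) • 1 + A * Gt * Aᴴ) / (W : ℝ) ^ 2)) • A) :=
  eta_injective_general K hK φ hφ hφ01 hupp hderiv

end RBM
end
end
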